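/- arXiv:math/0506369 — 2 statements merged into one kernel-verified Lean document; each statement's English description precedes it below -/
import Mathlib

section
/- Let (M_t) be a strictly positive continuous local martingale with M_0 = 1, let I_t = inf_{s≤t} M_s, and set Y*_t = M_t/I_t − 1. Then Y* belongs to E(M) and is the smallest element of E(M): for every Y ∈ E(M) and every t, Y*_t ≤ Y_t. Consequently Y* has more zeros than any other local submartingale in E(M), i.e. {t : Y_t = 0} ⊆ {t : Y*_t = 0} for every Y ∈ E(M). -/
open MeasureTheory Filter Set Topology
open scoped NNReal ENNReal Classical

noncomputable section

/-- The Lebesgue–Stieltjes measure associated with a function `f : ℝ → ℝ`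
(with junk value `0` when `f` is not monotone right-continuous). -/
def sMeasure (f : ℝ → ℝ) : Measure ℝ :=
  if h : Monotone f ∧ ∀ x, ContinuousWithinAt f (Set.Ici x) x then
    StieltjesFunction.measure ⟨f, h.1, h.2⟩ else 0

/-- The pathwise Lebesgue–Stieltjes integral `∫_(0,t] H_s dA_s`. -/
def sInt {Ω : Type*} (A H : ℝ≥0 → Ω → ℝ) (t : ℝ≥0) (ω : Ω) : ℝ :=
  ∫ s in Set.Ioc (0:ℝ) (t:ℝ), H s.toNNReal ω ∂(sMeasure fun x => A x.toNNReal ω)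

variable {Ω : Type*} {m0 : MeasurableSpace Ω}

/-- The running infimum `I_t = inf_{s ≤ t} M_s`. -/
def infP (M : ℝ≥0 → Ω → ℝ) (t : ℝ≥0) (ω : Ω) : ℝ := ⨅ s : Set.Iic t, M s.1 ω

/-- The running supremum `sup_{s ≤ t} M_s`. -/
def supP (M : ℝ≥0 → Ω → ℝ) (t : ℝ≥0) (ω : Ω) : ℝ := ⨆ s : Set.Iic t, M s.1 ω

/-- A process is a local martingale if there is a localizing sequence of stopping
times, increasing a.s. to infinity, reducing it to a martingale. -/
def IsLocalMartingale (ℱ : Filtration ℝ≥0 m0) (μ : Measure Ω) (X : ℝ≥0 → Ω → ℝ) : Prop :=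
  ∃ τ : ℕ → Ω → ℝ≥0, (∀ n, IsStoppingTime ℱ (fun ω => ((τ n ω : ℝ≥0) : WithTop ℝ≥0))) ∧
    (∀ᵐ ω ∂μ, Tendsto (fun n => τ n ω) atTop atTop) ∧
    ∀ n, Martingale (fun t ω => X (min t (τ n ω)) ω) ℱ μ

/-- Continuous local martingale. -/
def ContLocMart (ℱ : Filtration ℝ≥0 m0) (μ : Measure Ω) (X : ℝ≥0 → Ω → ℝ) : Prop :=
  IsLocalMartingale ℱ μ X ∧ Adapted ℱ X ∧ ∀ ω, Continuous fun t => X t ω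

/-- Continuous adapted increasing process. -/
def IncreasingProc (ℱ : Filtration ℝ≥0 m0) (C : ℝ≥0 → Ω → ℝ) : Prop :=
  Adapted ℱ C ∧ (∀ ω, Continuous fun t => C t ω) ∧ ∀ ω, Monotone fun t => C t ω

/-- `Y = m + ℓ` is the Doob-Meyer decomposition of the continuous local
submartingale `Y`: `m` is a continuous local martingale vanishing at `0` and `ℓ` is a
continuous adapted increasing process vanishing at `0`. -/
def DoobMeyer (ℱ : Filtration ℝ≥0 m0) (μ : Measure Ω) (Y m ℓ : ℝ≥0 → Ω → ℝ) : Prop :=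
  ContLocMart ℱ μ m ∧ (∀ ω, m 0 ω = 0) ∧ IncreasingProc ℱ ℓ ∧ (∀ ω, ℓ 0 ω = 0) ∧
    ∀ t ω, Y t ω = m t ω + ℓ t ω

/-- The (Stieltjes) measure `dA` is carried by the set `{t : X_t = 0}`: pathwise, `A`
does not increase on any interval where `X` does not vanish. -/
def CarriedByZeros (X A : ℝ≥0 → Ω → ℝ) (ω : Ω) : Prop :=
  ∀ s t : ℝ≥0, s ≤ t → (∀ u, s ≤ u → u ≤ t → X u ω ≠ 0) → A t ω = A s ω

/-- Class `(Σ)`: a nonnegative continuous local submartingale, vanishing at `0`, whose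
increasing part `dA` is carried by its zero set. -/
def IsClassSigma (ℱ : Filtration ℝ≥0 m0) (μ : Measure Ω) (X : ℝ≥0 → Ω → ℝ) : Prop :=
  (∀ t ω, 0 ≤ X t ω) ∧ (∀ ω, X 0 ω = 0) ∧ (∀ ω, Continuous fun t => X t ω) ∧
    ∃ N A, DoobMeyer ℱ μ X N A ∧ ∀ᵐ ω ∂μ, CarriedByZeros X A ω

/-- Class `(D)`: the family `{Y_T : T a (finite) stopping time}` is uniformly integrable. -/
def IsClassD (ℱ : Filtration ℝ≥0 m0) (μ : Measure Ω) (Y : ℝ≥0 → Ω → ℝ) : Prop :=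
  UniformIntegrable (fun τ : {τ : Ω → ℝ≥0 // IsStoppingTime ℱ (fun ω => ((τ ω : ℝ≥0) : WithTop ℝ≥0))} => fun ω => Y (τ.1 ω) ω) 1 μ

/-- `Y = M C - 1` is the multiplicative decomposition of `Y`:
`M` a strictly positive continuous local martingale with `M_0 = 1`, and `C` a continuous
adapted increasing process with `C_0 = 1`. -/
def MultDecomp (ℱ : Filtration ℝ≥0 m0) (μ : Measure Ω) (Y M C : ℝ≥0 → Ω → ℝ) : Prop :=
  ContLocMart ℱ μ M ∧ (∀ t ω, 0 < M t ω) ∧ (∀ ω, M 0 ω = 1) ∧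
    IncreasingProc ℱ C ∧ (∀ ω, C 0 ω = 1) ∧ ∀ t ω, Y t ω = M t ω * C t ω - 1

/-- `Q = ⟨X⟩` is the quadratic variation of the continuous local martingale `X`:
the continuous adapted increasing process, vanishing at `0`, such that `X² - Q` is a
local martingale. -/
def IsQuadVar (ℱ : Filtration ℝ≥0 m0) (μ : Measure Ω) (X Q : ℝ≥0 → Ω → ℝ) : Prop :=
  IncreasingProc ℱ Q ∧ (∀ ω, Q 0 ω = 0) ∧
    IsLocalMartingale ℱ μ fun t ω => X t ω ^ 2 - Q t ω

/-- `Q = ⟨X, Y⟩` is the quadratic covariation, obtained by polarization. -/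
def IsCovar (ℱ : Filtration ℝ≥0 m0) (μ : Measure Ω) (X Y Q : ℝ≥0 → Ω → ℝ) : Prop :=
  ∃ QX QY QXY, IsQuadVar ℱ μ X QX ∧ IsQuadVar ℱ μ Y QY ∧
    IsQuadVar ℱ μ (fun t ω => X t ω + Y t ω) QXY ∧
    ∀ t ω, Q t ω = (QXY t ω - QX t ω - QY t ω) / 2

/-- `V = ∫_0^· H_s dm_s` is the stochastic (Itô) integral of `H` against the continuous
local martingale `m` : `V` is the continuous local martingale, vanishing at `0`, such that
`⟨V, m⟩ = ∫ H d⟨m⟩` and `⟨V⟩ = ∫ H² d⟨m⟩`. -/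
def IsStochInt (ℱ : Filtration ℝ≥0 m0) (μ : Measure Ω) (H m V : ℝ≥0 → Ω → ℝ) : Prop :=
  IsLocalMartingale ℱ μ V ∧ (∀ ω, Continuous fun t => V t ω) ∧ (∀ ω, V 0 ω = 0) ∧
    ∃ Qm QV QVm, IsQuadVar ℱ μ m Qm ∧ IsQuadVar ℱ μ V QV ∧ IsCovar ℱ μ V m QVm ∧
      ∀ᵐ ω ∂μ, ∀ t, QVm t ω = sInt Qm H t ω ∧
        QV t ω = sInt Qm (fun s ω => H s ω ^ 2) t ω

/-- `L` is the (semimartingale) local time at `0` of the continuous local martingale `K`,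
characterized by Tanaka's formula `|K_t| = ∫_0^t sgn(K_s) dK_s + L_t`. -/
def IsLocalTimeAtZero (ℱ : Filtration ℝ≥0 m0) (μ : Measure Ω) (K L : ℝ≥0 → Ω → ℝ) : Prop :=
  ∃ V, IsStochInt ℱ μ (fun s ω => Real.sign (K s ω)) K V ∧
    ∀ᵐ ω ∂μ, ∀ t, |K t ω| = V t ω + L t ω

/-- A random time `L` is honest if for every `t` it agrees on `{L < t}` with some
`ℱ t`-measurable random variable. -/
def IsHonest (ℱ : Filtration ℝ≥0 m0) (L : Ω → ℝ≥0) : Prop :=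
  ∀ t : ℝ≥0, ∃ Lt : Ω → ℝ≥0, Measurable[ℱ t] Lt ∧ ∀ ω, L ω < t → L ω = Lt ω

/-- A random time `L` avoids stopping times if `P(L = T) = 0` for every stopping time `T`. -/
def AvoidsStoppingTimes (ℱ : Filtration ℝ≥0 m0) (μ : Measure Ω) (L : Ω → ℝ≥0) : Prop :=
  ∀ τ : Ω → ℝ≥0, IsStoppingTime ℱ (fun ω => ((τ ω : ℝ≥0) : WithTop ℝ≥0)) → μ {ω | L ω = τ ω} = 0

/-- The end `g = sup {t : (t, ω) ∈ H}` of a random set `H`. -/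
def endTime {Ω : Type*} (H : Set (ℝ≥0 × Ω)) (ω : Ω) : ℝ≥0 := sSup {t | (t, ω) ∈ H}

/-- A random set `H` with end `g` is saturated if `H = {t : P(g ≤ t | ℱ_t) = 0}`,
i.e. `H` is equal to its predictable shadow. -/
def IsSaturated (ℱ : Filtration ℝ≥0 m0) (μ : Measure Ω) (H : Set (ℝ≥0 × Ω)) : Prop :=
  ∀ Z : ℝ≥0 → Ω → ℝ, (∀ ω, Continuous fun t => Z t ω) →
    (∀ t, Z t =ᵐ[μ] μ[Set.indicator {ω | endTime H ω ≤ t} (fun _ => (1:ℝ)) | ℱ t]) →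
    ∀ᵐ ω ∂μ, ∀ t, ((t, ω) ∈ H ↔ Z t ω = 0)

/-- All martingales of the filtration are continuous (i.e. have continuous versions). -/
def AllMartingalesContinuous (ℱ : Filtration ℝ≥0 m0) (μ : Measure Ω) : Prop :=
  ∀ f : ℝ≥0 → Ω → ℝ, Martingale f ℱ μ →
    ∃ g : ℝ≥0 → Ω → ℝ, (∀ t, f t =ᵐ[μ] g t) ∧ ∀ ω, Continuous fun t => g t ω

/-- `B` is a standard Brownian motion for the filtration `ℱ`. -/
def IsBrownian (ℱ : Filtration ℝ≥0 m0) (μ : Measure Ω) (B : ℝ≥0 → Ω → ℝ) : Prop :=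
  Adapted ℱ B ∧ (∀ ω, B 0 ω = 0) ∧ (∀ ω, Continuous fun t => B t ω) ∧
    ∀ s t : ℝ≥0, s ≤ t →
      ProbabilityTheory.Indep (MeasurableSpace.comap (fun ω => B t ω - B s ω) inferInstance)
        (ℱ s) μ ∧
      μ.map (fun ω => B t ω - B s ω) = ProbabilityTheory.gaussianReal 0 (t - s)

end

/-!
If `Y = M C - 1 ≥ 0` with `C` increasing, then for `s ≤ t` we get `M_s C_t ≥ M_s C_s ≥ 1`, so
`C_t ≥ 1 / I_t` and `Y_t ≥ M_t / I_t - 1 = Y*_t`. Conversely `Y*` has the multiplicative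
decomposition `Y* = M · I⁻¹ - 1`, where `I⁻¹` is continuous, adapted and increasing because the
running minimum of a continuous adapted path is.
-/

namespace NNReal

theorem image_mul_Icc_zero_one (t : ℝ≥0) : (t * ·) '' Icc 0 1 = Iic t := by
  refine Subset.antisymm (image_subset_iff.2 fun u hu => mul_le_of_le_one_right' hu.2) ?_
  intro s hs
  rcases eq_or_ne t 0 with rfl | ht
  · exact ⟨0, left_mem_Icc.2 zero_le_one, by simpa using (nonpos_iff_eq_zero.1 hs).symm⟩
  · exact ⟨s / t, ⟨zero_le, div_le_one_of_le₀ hs zero_le⟩, mul_div_cancel₀ s ht⟩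

theorem isCompact_Iic (t : ℝ≥0) : IsCompact (Iic t) :=
  Icc_bot (a := t) ▸ isCompact_Icc

end NNReal

section RunningInfimum

variable {Ω : Type*} {M C : ℝ≥0 → Ω → ℝ} {ω : Ω}

theorem infP_eq_sInf_image (t : ℝ≥0) : infP M t ω = sInf ((M · ω) '' Iic t) := by
  rw [infP, sInf_image']

theorem inv_le_infP (hpos : ∀ t, 0 < M t ω) (hC : Monotone fun t => C t ω)
    (hMC : ∀ s, 1 ≤ M s ω * C s ω) (t : ℝ≥0) : (C t ω)⁻¹ ≤ infP M t ω := by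
  have hCt : 0 < C t ω := pos_of_mul_pos_right (zero_lt_one.trans_le (hMC t)) (hpos t).le
  refine le_ciInf fun s => (inv_le_iff_one_le_mul₀ hCt).2 ?_
  exact (hMC s).trans (mul_le_mul_of_nonneg_left (hC s.2) (hpos s).le)

theorem div_infP_le_mul (hpos : ∀ t, 0 < M t ω) (hC : Monotone fun t => C t ω)
    (hMC : ∀ s, 1 ≤ M s ω * C s ω) (t : ℝ≥0) :
    M t ω / infP M t ω ≤ M t ω * C t ω := by
  have hCt : 0 < C t ω := pos_of_mul_pos_right (zero_lt_one.trans_le (hMC t)) (hpos t).le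
  have hI := inv_le_infP hpos hC hMC t
  rw [div_eq_mul_inv]
  exact mul_le_mul_of_nonneg_left ((inv_le_comm₀ ((inv_pos.2 hCt).trans_le hI) hCt).2 hI)
    (hpos t).le

theorem isCompact_image_Iic (hω : Continuous fun t => M t ω) (t : ℝ≥0) :
    IsCompact ((M · ω) '' Iic t) :=
  (NNReal.isCompact_Iic t).image hω

theorem infP_mem_image (hω : Continuous fun t => M t ω) (t : ℝ≥0) :
    infP M t ω ∈ (M · ω) '' Iic t := by
  rw [infP_eq_sInf_image]
  exact (isCompact_image_Iic hω t).sInf_mem (nonempty_Iic.image _)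

theorem infP_le_of_le (hω : Continuous fun t => M t ω) {s t : ℝ≥0} (hst : s ≤ t) :
    infP M t ω ≤ M s ω := by
  rw [infP_eq_sInf_image]
  exact csInf_le (isCompact_image_Iic hω t).bddBelow (mem_image_of_mem _ hst)

theorem infP_zero (hω : Continuous fun t => M t ω) : infP M 0 ω = M 0 ω := by
  obtain ⟨s, hs, hs'⟩ := infP_mem_image hω 0
  rw [← hs', nonpos_iff_eq_zero.1 (mem_Iic.1 hs)]

theorem infP_antitone (hω : Continuous fun t => M t ω) :
    Antitone fun t => infP M t ω := fun _ _ hst =>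
  le_ciInf fun s => infP_le_of_le hω (s.2.trans hst)

-- `I_t` is the minimum of `u ↦ M_{t u}` over the fixed compact set `[0, 1]`.
theorem continuous_infP (hω : Continuous fun t => M t ω) :
    Continuous fun t => infP M t ω := by
  have : Continuous fun t => sInf ((fun u => M (t * u) ω) '' Icc 0 1) :=
    isCompact_Icc.continuous_sInf (hω.comp continuous_mul)
  simpa only [infP_eq_sInf_image, ← NNReal.image_mul_Icc_zero_one, image_image] using this

theorem infP_pos (hω : Continuous fun t => M t ω) (hpos : ∀ t, 0 < M t ω)
    (t : ℝ≥0) : 0 < infP M t ω := by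
  obtain ⟨s, -, hs⟩ := infP_mem_image hω t
  exact hs ▸ hpos s

end RunningInfimum

section Processes

variable {Ω : Type*} {m0 : MeasurableSpace Ω} {ℱ : Filtration ℝ≥0 m0}
  {M : ℝ≥0 → Ω → ℝ}

theorem measurable_infP (hM : Adapted ℱ M) (hcont : ∀ ω, Continuous fun t => M t ω)
    (t : ℝ≥0) : Measurable[ℱ t] (infP M t) := by
  obtain ⟨S, hS, hSdense⟩ := TopologicalSpace.exists_countable_dense (Iic t)
  have : Countable S := hS.to_subtype
  have hinf : infP M t = fun ω => ⨅ s : S, M s.1.1 ω := funext fun ω =>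
    (hSdense.ciInf' (f := fun s : Iic t => M s ω) ((hcont ω).comp continuous_subtype_val)).symm
  rw [hinf]
  exact Measurable.iInf fun s : S => (hM s.1.1).mono (ℱ.mono s.1.2) le_rfl

theorem increasingProc_inv_infP (hM : Adapted ℱ M) (hcont : ∀ ω, Continuous fun t => M t ω)
    (hpos : ∀ t ω, 0 < M t ω) : IncreasingProc ℱ fun t ω => (infP M t ω)⁻¹ :=
  ⟨fun t => (measurable_infP hM hcont t).inv,
    fun ω => (continuous_infP (hcont ω)).inv₀ fun t => (infP_pos (hcont ω) (hpos · ω) t).ne',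
    fun ω _ _ hst =>
      inv_anti₀ (infP_pos (hcont ω) (hpos · ω) _) (infP_antitone (hcont ω) hst)⟩

end Processes

theorem statement5_general {Ω : Type*} {m0 : MeasurableSpace Ω} (μ : Measure Ω)
    (ℱ : Filtration ℝ≥0 m0)
    (M : ℝ≥0 → Ω → ℝ) (hM : ContLocMart ℱ μ M) (hMpos : ∀ t ω, 0 < M t ω)
    (hM0 : ∀ ω, M 0 ω = 1) :
    ∀ Ystar : ℝ≥0 → Ω → ℝ, (Ystar = fun t ω => M t ω / infP M t ω - 1) →
      ((∀ t ω, 0 ≤ Ystar t ω) ∧ (∀ ω, Ystar 0 ω = 0) ∧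
        (∀ ω, Continuous fun t => Ystar t ω) ∧
        ∃ C, IncreasingProc ℱ C ∧ (∀ ω, C 0 ω = 1) ∧
          ∀ t ω, Ystar t ω = M t ω * C t ω - 1) ∧
      ∀ Y : ℝ≥0 → Ω → ℝ,
        ((∀ t ω, 0 ≤ Y t ω) ∧ (∀ ω, Y 0 ω = 0) ∧
          (∀ ω, Continuous fun t => Y t ω) ∧
          ∃ C, IncreasingProc ℱ C ∧ (∀ ω, C 0 ω = 1) ∧
            ∀ t ω, Y t ω = M t ω * C t ω - 1) →
        ∀ t ω, Ystar t ω ≤ Y t ω ∧ (Y t ω = 0 → Ystar t ω = 0) := by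
  rintro _ rfl
  obtain ⟨-, hadapt, hcont⟩ := hM
  have hIpos t ω : 0 < infP M t ω := infP_pos (hcont ω) (hMpos · ω) t
  have hYstar_nonneg t ω : 0 ≤ M t ω / infP M t ω - 1 :=
    sub_nonneg.2 ((one_le_div (hIpos t ω)).2 (infP_le_of_le (hcont ω) le_rfl))
  refine ⟨⟨hYstar_nonneg, fun ω => ?_, fun ω => ?_, _,
    increasingProc_inv_infP hadapt hcont hMpos, fun ω => ?_,
    fun _ _ => congrArg (· - 1) (div_eq_mul_inv _ _)⟩, ?_⟩
  · simp only [infP_zero (hcont ω), div_self (hMpos 0 ω).ne', sub_self]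
  · exact ((hcont ω).div (continuous_infP (hcont ω)) fun t => (hIpos t ω).ne').sub
      continuous_const
  · simp only [infP_zero (hcont ω), hM0, inv_one]
  · rintro Y ⟨hY, -, -, C, ⟨-, -, hC⟩, -, hYMC⟩ t ω
    have hMC s : 1 ≤ M s ω * C s ω := by linarith [hY s ω, hYMC s ω]
    have hle : M t ω / infP M t ω - 1 ≤ Y t ω :=
      hYMC t ω ▸ sub_le_sub_right (div_infP_le_mul (hMpos · ω) (hC ω) hMC t) 1
    exact ⟨hle, fun hY0 => le_antisymm (hY0 ▸ hle) (hYstar_nonneg t ω)⟩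

/-- Corollary: `Y* = M/I - 1` is the smallest element of `E(M)`.
`Y*` belongs to `E(M)` (the set of nonnegative local submartingales whose martingale part
in the multiplicative decomposition is `M`), it satisfies `Y* ≤ Y` for every `Y ∈ E(M)`,
and hence `Y*` vanishes more than any other element of `E(M)`. -/
theorem statement5 {Ω : Type*} {m0 : MeasurableSpace Ω} (μ : Measure Ω)
    [IsProbabilityMeasure μ] (ℱ : Filtration ℝ≥0 m0)
    (M : ℝ≥0 → Ω → ℝ) (hM : ContLocMart ℱ μ M) (hMpos : ∀ t ω, 0 < M t ω)
    (hM0 : ∀ ω, M 0 ω = 1) :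
    ∀ Ystar : ℝ≥0 → Ω → ℝ, (Ystar = fun t ω => M t ω / infP M t ω - 1) →
      ((∀ t ω, 0 ≤ Ystar t ω) ∧ (∀ ω, Ystar 0 ω = 0) ∧
        (∀ ω, Continuous fun t => Ystar t ω) ∧
        ∃ C, IncreasingProc ℱ C ∧ (∀ ω, C 0 ω = 1) ∧
          ∀ t ω, Ystar t ω = M t ω * C t ω - 1) ∧
      ∀ Y : ℝ≥0 → Ω → ℝ,
        ((∀ t ω, 0 ≤ Y t ω) ∧ (∀ ω, Y 0 ω = 0) ∧
          (∀ ω, Continuous fun t => Y t ω) ∧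
          ∃ C, IncreasingProc ℱ C ∧ (∀ ω, C 0 ω = 1) ∧
            ∀ t ω, Y t ω = M t ω * C t ω - 1) →
        ∀ t ω, Ystar t ω ≤ Y t ω ∧ (Y t ω = 0 → Ystar t ω = 0) :=
  statement5_general μ ℱ M hM hMpos hM0
end

section
/- Let (U_t) be a continuous local martingale with U_0 = 0, and let M_t = exp(U_t − (1/2)⟨U⟩_t) be its stochastic exponential, with I_∞ = inf_{t≥0} M_t. Then E[log(1/I_∞)] < ∞ if and only if E[⟨U⟩_∞] < ∞; equivalently, since log(1/I_∞) = −inf_{t≥0}(U_t − (1/2)⟨U⟩_t), one has E[⟨U⟩_∞] < ∞ if and only if E[inf_{t≥0}(U_t − (1/2)⟨U⟩_t)] > −∞. -/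
/-!
Put `X = U - ⟨U⟩/2`. Since `exp` commutes with infima, `log (1 / I_∞) = -inf_t X_t`, and
`I_∞ > 0` exactly when `X` is bounded below.

If `g = -inf_t X_t` is integrable, then `⟨U⟩/2 ≤ U + g`; stopping along a localizing sequence
of `U` gives `E[⟨U⟩_{t ∧ τ_n} / 2] ≤ E[g]`, and Fatou's lemma gives `E[⟨U⟩_∞] ≤ 2 E[g]`.

Conversely, if `E[⟨U⟩_∞] < ∞`, then along a localizing sequence `σ_n` of `U² - ⟨U⟩` the stopped
processes `U²_{t ∧ σ_n}` are nonnegative submartingales with `E[U²_{t ∧ σ_n}] ≤ E[⟨U⟩_∞]`.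
Doob's maximal inequality on finite grids, together with path continuity, yields the weak-`L²`
bound `P(sup_t |U_t| > r) ≤ E[⟨U⟩_∞] / r²`, so `sup_t |U_t|` is integrable, and so is
`g ≤ sup_t |U_t| + ⟨U⟩_∞`.
-/

open MeasureTheory Filter Set Topology
open scoped NNReal ENNReal Classical

namespace Real

variable {ι : Type*} [Nonempty ι]

lemma exp_iInf {g : ι → ℝ} (hg : BddBelow (range g)) : exp (⨅ i, g i) = ⨅ i, exp (g i) :=
  Monotone.map_ciInf_of_continuousAt continuous_exp.continuousAt exp_monotone hg

lemma iInf_exp_eq_zero_of_not_bddBelow {g : ι → ℝ} (hg : ¬ BddBelow (range g)) :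
    ⨅ i, exp (g i) = 0 := by
  refine le_antisymm (le_of_forall_pos_le_add fun ε hε => ?_)
    (le_ciInf fun i => (exp_pos _).le)
  obtain ⟨-, ⟨i, rfl⟩, hi⟩ := not_bddBelow_iff.1 hg (log ε)
  calc ⨅ i, exp (g i) ≤ exp (g i) := ciInf_le ⟨0, by rintro - ⟨j, rfl⟩; exact (exp_pos _).le⟩ i
    _ ≤ 0 + ε := by rw [zero_add, ← exp_log hε]; exact exp_le_exp.2 hi.le

lemma log_inv_iInf_exp (g : ι → ℝ) : log (⨅ i, exp (g i))⁻¹ = -⨅ i, g i := by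
  by_cases hg : BddBelow (range g)
  · rw [← exp_iInf hg, ← exp_neg, log_exp]
  · rw [iInf_exp_eq_zero_of_not_bddBelow hg, iInf_of_not_bddBelow hg]
    simp

lemma iInf_exp_pos_iff (g : ι → ℝ) : 0 < ⨅ i, exp (g i) ↔ BddBelow (range g) := by
  refine ⟨fun h => by_contra fun hg => h.ne' (iInf_exp_eq_zero_of_not_bddBelow hg),
    fun hg => ?_⟩
  rw [← exp_iInf hg]
  exact exp_pos _

end Real

lemma bddBelow_and_ofReal_neg_iInf_le {ι : Type*} [Nonempty ι] {g : ι → ℝ} {b : ℝ≥0∞}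
    (hb : b ≠ ⊤) (h : ∀ i, ENNReal.ofReal (-g i) ≤ b) :
    BddBelow (range g) ∧ ENNReal.ofReal (-⨅ i, g i) ≤ b := by
  have hlow : ∀ i, -b.toReal ≤ g i := fun i => by
    have := (ENNReal.ofReal_le_iff_le_toReal hb).1 (h i)
    linarith
  refine ⟨⟨-b.toReal, by rintro - ⟨i, rfl⟩; exact hlow i⟩, ?_⟩
  rw [ENNReal.ofReal_le_iff_le_toReal hb, neg_le]
  exact le_ciInf hlow

section Measurability

variable {Ω T α : Type*} [MeasurableSpace Ω] [TopologicalSpace T] [Nonempty T]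
  [TopologicalSpace.SeparableSpace T] [ConditionallyCompleteLinearOrder α] [TopologicalSpace α]
  [OrderTopology α] [SecondCountableTopology α] [MeasurableSpace α] [BorelSpace α]
  {f : T → Ω → α}

lemma measurable_iInf_of_continuous (hf : ∀ t, Measurable (f t))
    (hc : ∀ ω, Continuous fun t => f t ω) : Measurable fun ω => ⨅ t, f t ω := by
  have hd := TopologicalSpace.denseRange_denseSeq T
  have : (fun ω => ⨅ t, f t ω) = fun ω => ⨅ n, f (TopologicalSpace.denseSeq T n) ω := by
    funext ω
    rw [← hd.ciInf' (hc ω), ← rangeFactorization_surjective.iInf_comp]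
    rfl
  rw [this]
  exact Measurable.iInf fun n => hf _

lemma measurable_iSup_of_continuous (hf : ∀ t, Measurable (f t))
    (hc : ∀ ω, Continuous fun t => f t ω) : Measurable fun ω => ⨆ t, f t ω := by
  have hd := TopologicalSpace.denseRange_denseSeq T
  have : (fun ω => ⨆ t, f t ω) = fun ω => ⨆ n, f (TopologicalSpace.denseSeq T n) ω := by
    funext ω
    rw [← hd.ciSup' (hc ω), ← rangeFactorization_surjective.iSup_comp]
    rfl
  rw [this]
  exact Measurable.iSup fun n => hf _

end Measurability

lemma ENNReal.le_tsum_indicator_natCast_lt (x : ℝ≥0∞) :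
    x ≤ ∑' k : ℕ, {y : ℝ≥0∞ | (k : ℝ≥0∞) < y}.indicator 1 x := by
  refine ENNReal.le_of_forall_nnreal_lt fun r hr => ?_
  calc (r : ℝ≥0∞) ≤ (⌈r⌉₊ : ℝ≥0∞) := by exact_mod_cast Nat.le_ceil r
    _ = ∑ k ∈ Finset.range ⌈r⌉₊, {y : ℝ≥0∞ | (k : ℝ≥0∞) < y}.indicator 1 x := by
        rw [Finset.sum_congr rfl fun k hk => indicator_of_mem (?_ : x ∈ _) _]
        · simp
        · exact lt_trans (by exact_mod_cast Nat.lt_ceil.1 (Finset.mem_range.1 hk)) hr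
    _ ≤ _ := ENNReal.sum_le_tsum _

lemma ENNReal.tsum_inv_natCast_add_one_sq_ne_top :
    ∑' k : ℕ, (((k : ℝ≥0∞) + 1) ^ 2)⁻¹ ≠ ⊤ := by
  have h : Summable fun k : ℕ => (((k : ℝ≥0) + 1) ^ 2)⁻¹ := by
    rw [← NNReal.summable_coe]
    simpa using (summable_nat_add_iff 1).2 (Real.summable_nat_pow_inv.2 (by norm_num : 1 < 2))
  convert ENNReal.tsum_coe_ne_top_iff_summable.2 h using 3 with k
  rw [ENNReal.coe_inv (by positivity)]
  push_cast
  rfl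

section Tail

variable {Ω : Type*} {m0 : MeasurableSpace Ω} {μ : Measure Ω}

lemma lintegral_le_tsum_measure_natCast_lt {W : Ω → ℝ≥0∞} (hW : Measurable W) :
    ∫⁻ ω, W ω ∂μ ≤ ∑' k : ℕ, μ {ω | (k : ℝ≥0∞) < W ω} := by
  have hmeas : ∀ k : ℕ, MeasurableSet {ω | (k : ℝ≥0∞) < W ω} := fun k => hW measurableSet_Ioi
  calc ∫⁻ ω, W ω ∂μ ≤ ∫⁻ ω, ∑' k : ℕ, {ω | (k : ℝ≥0∞) < W ω}.indicator 1 ω ∂μ :=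
        lintegral_mono fun ω => ENNReal.le_tsum_indicator_natCast_lt (W ω)
    _ = ∑' k : ℕ, μ {ω | (k : ℝ≥0∞) < W ω} := by
        rw [lintegral_tsum fun k => (measurable_one.indicator (hmeas k)).aemeasurable]
        simp_rw [lintegral_indicator_one (hmeas _)]

lemma lintegral_lt_top_of_measure_lt_le_div_sq [IsFiniteMeasure μ] {W : Ω → ℝ≥0∞}
    (hW : Measurable W) {C : ℝ≥0∞} (hC : C ≠ ⊤)
    (hweak : ∀ r : ℝ≥0, 0 < r → μ {ω | (r : ℝ≥0∞) < W ω} ≤ C / (r : ℝ≥0∞) ^ 2) :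
    ∫⁻ ω, W ω ∂μ < ⊤ := by
  refine (lintegral_le_tsum_measure_natCast_lt hW).trans_lt ?_
  rw [tsum_eq_zero_add' ENNReal.summable]
  refine ENNReal.add_lt_top.2 ⟨measure_lt_top μ _, ?_⟩
  calc ∑' k : ℕ, μ {ω | ((k + 1 : ℕ) : ℝ≥0∞) < W ω}
      ≤ ∑' k : ℕ, C * (((k : ℝ≥0∞) + 1) ^ 2)⁻¹ := ENNReal.tsum_le_tsum fun k => by
        simpa [div_eq_mul_inv] using hweak (k + 1) (by positivity)
    _ < ⊤ := by
        rw [ENNReal.tsum_mul_left]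
        exact ENNReal.mul_lt_top hC.lt_top ENNReal.tsum_inv_natCast_add_one_sq_ne_top.lt_top

lemma measure_le_of_ae_eventually_mem {A : Set Ω} {E : ℕ → Set Ω} {b : ℝ≥0∞}
    (h : ∀ᵐ ω ∂μ, ω ∈ A → ∀ᶠ n in atTop, ω ∈ E n) (hE : ∀ n, μ (E n) ≤ b) : μ A ≤ b := by
  have hA : A ≤ᵐ[μ] (⋃ n, ⋂ m ≥ n, E m : Set Ω) := by
    filter_upwards [h] with ω hω hωA
    change ω ∈ ⋃ n, ⋂ m ≥ n, E m
    simpa only [mem_iUnion, mem_iInter] using eventually_atTop.1 (hω hωA)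
  calc μ A ≤ μ (⋃ n, ⋂ m ≥ n, E m) := measure_mono_ae hA
    _ = ⨆ n, μ (⋂ m ≥ n, E m) :=
        Monotone.measure_iUnion fun a b hab =>
          biInter_mono (fun m hm => hab.trans hm) fun _ _ => le_rfl
    _ ≤ b := iSup_le fun n => (measure_mono (biInter_subset_of_mem le_rfl)).trans (hE n)

end Tail

section LocalMartingale

variable {Ω ι κ : Type*} {m0 : MeasurableSpace Ω} {μ : Measure Ω}

def MeasureTheory.Filtration.comp [Preorder ι] [Preorder κ] (ℱ : Filtration ι m0) {s : κ → ι}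
    (hs : Monotone s) : Filtration κ m0 :=
  ⟨fun k => ℱ (s k), fun _ _ h => ℱ.mono (hs h), fun _ => ℱ.le _⟩

lemma MeasureTheory.Submartingale.comp_monotone [Preorder ι] [Preorder κ] {ℱ : Filtration ι m0}
    {f : ι → Ω → ℝ} (hf : Submartingale f ℱ μ) {s : κ → ι} (hs : Monotone s) :
    Submartingale (fun k => f (s k)) (ℱ.comp hs) μ :=
  ⟨fun k => hf.stronglyAdapted (s k), fun _ _ h => hf.ae_le_condExp (hs h),
    fun k => hf.integrable (s k)⟩

lemma MeasureTheory.Submartingale.measure_le_sup'_le [Preorder ι] [IsFiniteMeasure μ]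
    {ℱ : Filtration ι m0} {Y : ι → Ω → ℝ} (hY : Submartingale Y ℱ μ) (hnn : ∀ i ω, 0 ≤ Y i ω)
    {c : ℝ} (hc : ∀ i, ∫ ω, Y i ω ∂μ ≤ c) {s : ℕ → ι} (hs : Monotone s) (N : ℕ) {ε : ℝ≥0}
    (hε : ε ≠ 0) :
    μ {ω | (ε : ℝ) ≤ (Finset.range (N + 1)).sup' Finset.nonempty_range_add_one
      fun k => Y (s k) ω} ≤ ENNReal.ofReal c / ε := by
  rw [ENNReal.le_div_iff_mul_le (Or.inl (by simpa using hε)) (Or.inl ENNReal.coe_ne_top),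
    mul_comm]
  refine (maximal_ineq (hY.comp_monotone hs) (fun k ω => hnn _ ω) N).trans
    (ENNReal.ofReal_le_ofReal ?_)
  exact (setIntegral_le_integral ((hY.integrable _)) (ae_of_all _ fun ω => hnn _ ω)).trans (hc _)

lemma MeasureTheory.Martingale.integral_eq [Preorder ι] [IsFiniteMeasure μ]
    {ℱ : Filtration ι m0} {f : ι → Ω → ℝ} (hf : Martingale f ℱ μ) {i j : ι} (hij : i ≤ j) :
    ∫ ω, f j ω ∂μ = ∫ ω, f i ω ∂μ := by
  rw [← integral_condExp (ℱ.le i)]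
  exact integral_congr_ae (hf.condExp_ae_eq hij)

lemma submartingale_of_monotone [Preorder ι] [IsFiniteMeasure μ] {ℱ : Filtration ι m0}
    {A : ι → Ω → ℝ} (hA : StronglyAdapted ℱ A) (hmono : ∀ ω, Monotone fun i => A i ω)
    (hint : ∀ i, Integrable (A i) μ) : Submartingale A ℱ μ := by
  refine ⟨hA, fun i j hij => ?_, hint⟩
  rw [← condExp_of_stronglyMeasurable (ℱ.le i) (hA i) (hint i)]
  exact condExp_mono (hint i) (hint j) (ae_of_all _ fun ω => hmono ω hij)

variable {ℱ : Filtration ℝ≥0 m0}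

lemma MeasureTheory.Adapted.stronglyAdapted_stopped {u : ℝ≥0 → Ω → ℝ} (hu : Adapted ℱ u)
    (hc : ∀ ω, Continuous fun t => u t ω) {τ : Ω → ℝ≥0}
    (hτ : IsStoppingTime ℱ fun ω => ((τ ω : ℝ≥0) : WithTop ℝ≥0)) :
    StronglyAdapted ℱ fun t ω => u (min t (τ ω)) ω := by
  convert hu.stronglyAdapted.stoppedProcess hc hτ using 2 with t
  funext ω
  simp only [stoppedProcess, ← WithTop.coe_min]
  rfl

lemma MeasureTheory.Adapted.measurable_iSup_ofReal {u : ℝ≥0 → Ω → ℝ} (hu : Adapted ℱ u)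
    (hc : ∀ ω, Continuous fun t => u t ω) : Measurable fun ω => ⨆ t, ENNReal.ofReal (u t ω) :=
  measurable_iSup_of_continuous
    (fun t => ENNReal.measurable_ofReal.comp ((hu t).mono (ℱ.le t) le_rfl))
    fun ω => ENNReal.continuous_ofReal.comp (hc ω)

lemma lintegral_iSup_le_of_forall_lintegral_le {A : ℝ≥0 → Ω → ℝ}
    (hA : ∀ ω, Monotone fun t => A t ω) {ρ : ℕ → Ω → ℝ≥0}
    (hρ : ∀ᵐ ω ∂μ, Tendsto (fun n => ρ n ω) atTop atTop)
    (hmeas : ∀ n, Measurable fun ω => A (ρ n ω) ω) {b : ℝ≥0∞}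
    (hb : ∀ n, ∫⁻ ω, ENNReal.ofReal (A (ρ n ω) ω) ∂μ ≤ b) :
    ∫⁻ ω, ⨆ t, ENNReal.ofReal (A t ω) ∂μ ≤ b := by
  calc ∫⁻ ω, ⨆ t, ENNReal.ofReal (A t ω) ∂μ
      = ∫⁻ ω, liminf (fun n => ENNReal.ofReal (A (ρ n ω) ω)) atTop ∂μ := by
        refine lintegral_congr_ae ?_
        filter_upwards [hρ] with ω hω
        have hmono : Monotone fun t => ENNReal.ofReal (A t ω) :=
          fun _ _ h => ENNReal.ofReal_le_ofReal (hA ω h)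
        exact ((tendsto_atTop_iSup hmono).comp hω).liminf_eq.symm
    _ ≤ liminf (fun n => ∫⁻ ω, ENNReal.ofReal (A (ρ n ω) ω) ∂μ) atTop :=
        lintegral_liminf_le fun n => ENNReal.measurable_ofReal.comp (hmeas n)
    _ ≤ b := liminf_le_of_frequently_le' (Frequently.of_forall hb)

lemma lintegral_iSup_le_integral_of_le_add [IsFiniteMeasure μ] {X A : ℝ≥0 → Ω → ℝ} {g : Ω → ℝ}
    (hX : IsLocalMartingale ℱ μ X) (hX0 : ∀ ω, X 0 ω = 0) (hA : Adapted ℱ A)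
    (hAc : ∀ ω, Continuous fun t => A t ω) (hAmono : ∀ ω, Monotone fun t => A t ω)
    (hAnn : ∀ t ω, 0 ≤ A t ω) (hg : Integrable g μ)
    (hle : ∀ᵐ ω ∂μ, ∀ t, A t ω ≤ X t ω + g ω) :
    ∫⁻ ω, ⨆ t, ENNReal.ofReal (A t ω) ∂μ ≤ ENNReal.ofReal (∫ ω, g ω ∂μ) := by
  obtain ⟨τ, hτ, hτ_top, hmart⟩ := hX
  have hXτ_int : ∀ n t, Integrable (fun ω => X (min t (τ n ω)) ω) μ :=
    fun n t => (hmart n).integrable t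
  have hAτ_le : ∀ n t, ∀ᵐ ω ∂μ, A (min t (τ n ω)) ω ≤ X (min t (τ n ω)) ω + g ω :=
    fun n t => by filter_upwards [hle] with ω hω using hω _
  have hAτ_meas : ∀ n t, StronglyMeasurable fun ω => A (min t (τ n ω)) ω :=
    fun n t => ((hA.stronglyAdapted_stopped hAc (hτ n)) t).mono (ℱ.le t)
  have hAτ_int : ∀ n t, Integrable (fun ω => A (min t (τ n ω)) ω) μ := by
    refine fun n t => ((hXτ_int n t).abs.add hg.abs).mono' (hAτ_meas n t).aestronglyMeasurable ?_
    filter_upwards [hAτ_le n t] with ω hω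
    rw [Real.norm_eq_abs, abs_of_nonneg (hAnn _ ω)]
    exact hω.trans (add_le_add (le_abs_self _) (le_abs_self _))
  have hXτ_mean : ∀ n t, ∫ ω, X (min t (τ n ω)) ω ∂μ = 0 := fun n t => by
    rw [(hmart n).integral_eq (zero_le : 0 ≤ t)]
    simp [hX0]
  refine lintegral_iSup_le_of_forall_lintegral_le hAmono (ρ := fun n ω => min (n : ℝ≥0) (τ n ω))
    ?_ (fun n => (hAτ_meas n n).measurable) fun n => ?_
  · filter_upwards [hτ_top] with ω hω using tendsto_inf_atTop _ tendsto_natCast_atTop_atTop hω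
  · rw [← ofReal_integral_eq_lintegral_ofReal (hAτ_int n n) (ae_of_all _ fun ω => hAnn _ ω)]
    refine ENNReal.ofReal_le_ofReal ?_
    calc ∫ ω, A (min (n : ℝ≥0) (τ n ω)) ω ∂μ
        ≤ ∫ ω, (X (min (n : ℝ≥0) (τ n ω)) ω + g ω) ∂μ :=
          integral_mono_ae (hAτ_int n n) ((hXτ_int n n).add hg) (hAτ_le n n)
      _ = ∫ ω, g ω ∂μ := by rw [integral_add (hXτ_int n n) hg, hXτ_mean, zero_add]

lemma lintegral_iSup_lt_top_of_lintegral_neg_iInf_lt_top [IsFiniteMeasure μ]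
    {U Q : ℝ≥0 → Ω → ℝ} (hU : ContLocMart ℱ μ U) (hU0 : ∀ ω, U 0 ω = 0)
    (hQ : IncreasingProc ℱ Q) (hQ0 : ∀ ω, Q 0 ω = 0)
    (hbdd : ∀ᵐ ω ∂μ, BddBelow (range fun t => U t ω - Q t ω / 2))
    (hint : ∫⁻ ω, ENNReal.ofReal (-⨅ t, (U t ω - Q t ω / 2)) ∂μ < ⊤) :
    ∫⁻ ω, ⨆ t, ENNReal.ofReal (Q t ω) ∂μ < ⊤ := by
  obtain ⟨hU_loc, hUa, hUc⟩ := hU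
  obtain ⟨hQa, hQc, hQm⟩ := hQ
  set g : Ω → ℝ := fun ω => -⨅ t, (U t ω - Q t ω / 2) with hg_def
  have hQnn : ∀ t ω, 0 ≤ Q t ω := fun t ω => hQ0 ω ▸ hQm ω zero_le
  have hg_nn : ∀ ω, 0 ≤ g ω := fun ω =>
    neg_nonneg.2 (Real.iInf_nonpos' ⟨0, by simp [hU0, hQ0]⟩)
  have hg_meas : Measurable g :=
    (measurable_iInf_of_continuous
      (fun t => ((hUa t).mono (ℱ.le t) le_rfl).sub (((hQa t).mono (ℱ.le t) le_rfl).div_const 2))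
      fun ω => (hUc ω).sub ((hQc ω).div_const 2)).neg
  have hg_int : Integrable g μ :=
    ⟨hg_meas.aestronglyMeasurable, (hasFiniteIntegral_iff_ofReal (ae_of_all _ hg_nn)).2 hint⟩
  have hle : ∀ᵐ ω ∂μ, ∀ t, Q t ω / 2 ≤ U t ω + g ω := by
    filter_upwards [hbdd] with ω hω t
    have := ciInf_le hω t
    simp only [hg_def]
    linarith
  have hbound := lintegral_iSup_le_integral_of_le_add hU_loc hU0 (A := fun t ω => Q t ω / 2)
    (fun t => (hQa t).div_const 2) (fun ω => (hQc ω).div_const 2)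
    (fun ω a b h => div_le_div_of_nonneg_right (hQm ω h) zero_le_two)
    (fun t ω => div_nonneg (hQnn t ω) zero_le_two) hg_int hle
  have hdouble : ∀ ω, ⨆ t, ENNReal.ofReal (Q t ω) = 2 * ⨆ t, ENNReal.ofReal (Q t ω / 2) := by
    intro ω
    rw [ENNReal.mul_iSup]
    refine iSup_congr fun t => ?_
    rw [← ENNReal.ofReal_ofNat 2, ← ENNReal.ofReal_mul zero_le_two]
    ring_nf
  rw [lintegral_congr hdouble, lintegral_const_mul' _ _ ENNReal.ofNat_ne_top]
  exact ENNReal.mul_lt_top ENNReal.ofNat_lt_top (hbound.trans_lt ENNReal.ofReal_lt_top)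

lemma measure_exists_lt_le_of_stopped_submartingale [IsFiniteMeasure μ] {X : ℝ≥0 → Ω → ℝ}
    (hXc : ∀ ω, Continuous fun t => X t ω) (hnn : ∀ t ω, 0 ≤ X t ω) {σ : ℕ → Ω → ℝ≥0}
    (hσ : ∀ᵐ ω ∂μ, Tendsto (fun n => σ n ω) atTop atTop)
    (hsub : ∀ n, Submartingale (fun t ω => X (min t (σ n ω)) ω) ℱ μ) {c : ℝ}
    (hc : ∀ n t, ∫ ω, X (min t (σ n ω)) ω ∂μ ≤ c) {ε : ℝ≥0} (hε : ε ≠ 0) :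
    μ {ω | ∃ t, (ε : ℝ) < X t ω} ≤ ENNReal.ofReal c / ε := by
  -- the grid points `i / j`, `i ≤ j * j`, have mesh `1 / j` and cover `[0, j]`
  have hgrid_mono : ∀ j : ℕ, Monotone fun i : ℕ => (i : ℝ≥0) / j := fun j a b h =>
    div_le_div_of_nonneg_right (by exact_mod_cast h) zero_le
  have hgrid : ∀ j N : ℕ, μ {ω | (ε : ℝ) ≤ (Finset.range (N + 1)).sup'
      Finset.nonempty_range_add_one fun i => X ((i : ℝ≥0) / j) ω} ≤ ENNReal.ofReal c / ε := by
    intro j N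
    refine measure_le_of_ae_eventually_mem ?_ fun n =>
      (hsub n).measure_le_sup'_le (fun t ω => hnn _ ω) (hc n) (hgrid_mono j) N hε
    filter_upwards [hσ] with ω hω hωA
    filter_upwards [hω.eventually_ge_atTop ((N : ℝ≥0) / j)] with n hn
    rwa [Finset.sup'_congr Finset.nonempty_range_add_one rfl fun i hi => by
      rw [min_eq_left ((hgrid_mono j (Nat.lt_succ_iff.1 (Finset.mem_range.1 hi))).trans hn)]]
  refine measure_le_of_ae_eventually_mem (ae_of_all _ ?_) fun j => hgrid j (j * j)
  rintro ω ⟨t, ht⟩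
  have htend : Tendsto (fun j : ℕ => ((⌊(t : ℝ) * j⌋₊ : ℝ≥0) / j)) atTop (𝓝 t) := by
    rw [← NNReal.tendsto_coe]
    push_cast
    exact (tendsto_nat_floor_mul_div_atTop t.coe_nonneg).comp tendsto_natCast_atTop_atTop
  have hlarge : ∀ᶠ j : ℕ in atTop, (ε : ℝ) < X ((⌊(t : ℝ) * j⌋₊ : ℝ≥0) / j) ω :=
    ((hXc ω).tendsto t).comp htend |>.eventually (lt_mem_nhds ht)
  have hindex : ∀ᶠ j : ℕ in atTop, ⌊(t : ℝ) * j⌋₊ ≤ j * j := by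
    filter_upwards [eventually_ge_atTop ⌈(t : ℝ)⌉₊] with j hj
    refine Nat.floor_le_of_le ?_
    push_cast
    exact mul_le_mul_of_nonneg_right ((Nat.le_ceil _).trans (by exact_mod_cast hj)) (by positivity)
  filter_upwards [hlarge, hindex] with j hj hj'
  exact hj.le.trans (Finset.le_sup' (fun i : ℕ => X ((i : ℝ≥0) / j) ω)
    (Finset.mem_range.2 (Nat.lt_succ_of_le hj')))

lemma lintegral_iSup_abs_lt_top_of_isQuadVar [IsFiniteMeasure μ] {U Q : ℝ≥0 → Ω → ℝ}
    (hU : Adapted ℱ U) (hUc : ∀ ω, Continuous fun t => U t ω) (hU0 : ∀ ω, U 0 ω = 0)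
    (hQ : IsQuadVar ℱ μ U Q) (hQ_fin : ∫⁻ ω, ⨆ t, ENNReal.ofReal (Q t ω) ∂μ < ⊤) :
    ∫⁻ ω, ⨆ t, ENNReal.ofReal |U t ω| ∂μ < ⊤ := by
  obtain ⟨⟨hQa, hQc, hQm⟩, hQ0, σ, hσ, hσ_top, hmart⟩ := hQ
  set C := ∫⁻ ω, ⨆ t, ENNReal.ofReal (Q t ω) ∂μ
  have hQnn : ∀ t ω, 0 ≤ Q t ω := fun t ω => hQ0 ω ▸ hQm ω zero_le
  have hQσ_adapted : ∀ n, StronglyAdapted ℱ fun t ω => Q (min t (σ n ω)) ω :=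
    fun n => hQa.stronglyAdapted_stopped hQc (hσ n)
  have hQσ_lint : ∀ n t, ∫⁻ ω, ENNReal.ofReal (Q (min t (σ n ω)) ω) ∂μ ≤ C :=
    fun n t => lintegral_mono fun ω => le_iSup (fun s => ENNReal.ofReal (Q s ω)) _
  have hQσ_int : ∀ n t, Integrable (fun ω => Q (min t (σ n ω)) ω) μ := fun n t =>
    ⟨((hQσ_adapted n t).mono (ℱ.le t)).aestronglyMeasurable,
      (hasFiniteIntegral_iff_ofReal (ae_of_all _ fun ω => hQnn _ ω)).2
        ((hQσ_lint n t).trans_lt hQ_fin)⟩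
  have hsub : ∀ n, Submartingale (fun t ω => U (min t (σ n ω)) ω ^ 2) ℱ μ := by
    intro n
    have hsplit : (fun t ω => U (min t (σ n ω)) ω ^ 2) = (fun t ω => Q (min t (σ n ω)) ω) +
        fun t ω => U (min t (σ n ω)) ω ^ 2 - Q (min t (σ n ω)) ω := by
      funext t ω
      simp only [Pi.add_apply]
      ring
    rw [hsplit]
    exact (submartingale_of_monotone (hQσ_adapted n)
      (fun ω a b h => hQm ω (min_le_min_right _ h)) (hQσ_int n)).add_martingale (hmart n)
  have hmean : ∀ n t, ∫ ω, U (min t (σ n ω)) ω ^ 2 ∂μ ≤ C.toReal := by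
    intro n t
    have hsplit : (fun ω => U (min t (σ n ω)) ω ^ 2) = fun ω =>
        (U (min t (σ n ω)) ω ^ 2 - Q (min t (σ n ω)) ω) + Q (min t (σ n ω)) ω := by
      ext ω; ring
    rw [hsplit, integral_add ((hmart n).integrable t) (hQσ_int n t),
      (hmart n).integral_eq (zero_le : 0 ≤ t),
      integral_eq_lintegral_of_nonneg_ae (ae_of_all _ fun ω => hQnn _ ω)
        ((hQσ_int n t).aestronglyMeasurable)]
    simpa [hU0, hQ0] using ENNReal.toReal_mono hQ_fin.ne (hQσ_lint n t)
  refine lintegral_lt_top_of_measure_lt_le_div_sq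
    (Adapted.measurable_iSup_ofReal (fun t => continuous_abs.measurable.comp (hU t))
      fun ω => (hUc ω).abs) hQ_fin.ne fun r hr => ?_
  have hweak := measure_exists_lt_le_of_stopped_submartingale (fun ω => (hUc ω).pow 2)
    (fun t ω => sq_nonneg _) hσ_top hsub hmean (ε := r ^ 2) (by positivity)
  have hset : {ω | (r : ℝ≥0∞) < ⨆ t, ENNReal.ofReal |U t ω|} =
      {ω | ∃ t, ((r ^ 2 : ℝ≥0) : ℝ) < U t ω ^ 2} := by
    ext ω
    simp only [mem_ofPred_eq, lt_iSup_iff]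
    refine exists_congr fun t => ?_
    rw [← ENNReal.ofReal_coe_nnreal, ENNReal.ofReal_lt_ofReal_iff_of_nonneg r.coe_nonneg,
      NNReal.coe_pow, sq_lt_sq, abs_of_nonneg r.coe_nonneg]
  rw [hset, ← ENNReal.coe_pow, ← ENNReal.ofReal_toReal hQ_fin.ne]
  exact hweak

lemma bddBelow_and_lintegral_neg_iInf_lt_top [IsFiniteMeasure μ] {U Q : ℝ≥0 → Ω → ℝ}
    (hUa : Adapted ℱ U) (hUc : ∀ ω, Continuous fun t => U t ω) (hU0 : ∀ ω, U 0 ω = 0)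
    (hQ : IsQuadVar ℱ μ U Q) (hQ_fin : ∫⁻ ω, ⨆ t, ENNReal.ofReal (Q t ω) ∂μ < ⊤) :
    (∀ᵐ ω ∂μ, BddBelow (range fun t => U t ω - Q t ω / 2)) ∧
      ∫⁻ ω, ENNReal.ofReal (-⨅ t, (U t ω - Q t ω / 2)) ∂μ < ⊤ := by
  have hW_fin := lintegral_iSup_abs_lt_top_of_isQuadVar hUa hUc hU0 hQ hQ_fin
  obtain ⟨⟨hQa, hQc, hQm⟩, hQ0, -⟩ := hQ
  have hQnn : ∀ t ω, 0 ≤ Q t ω := fun t ω => hQ0 ω ▸ hQm ω zero_le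
  have hW_meas := Adapted.measurable_iSup_ofReal (fun t => continuous_abs.measurable.comp (hUa t))
    fun ω => (hUc ω).abs
  have hS_meas := Adapted.measurable_iSup_ofReal hQa hQc
  have hpath : ∀ᵐ ω ∂μ, BddBelow (range fun t => U t ω - Q t ω / 2) ∧
      ENNReal.ofReal (-⨅ t, (U t ω - Q t ω / 2)) ≤
        (⨆ t, ENNReal.ofReal |U t ω|) + ⨆ t, ENNReal.ofReal (Q t ω) := by
    filter_upwards [ae_lt_top hW_meas hW_fin.ne, ae_lt_top hS_meas hQ_fin.ne] with ω hW hS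
    refine bddBelow_and_ofReal_neg_iInf_le (ENNReal.add_ne_top.2 ⟨hW.ne, hS.ne⟩) fun t => ?_
    calc ENNReal.ofReal (-(U t ω - Q t ω / 2))
        ≤ ENNReal.ofReal (|U t ω| + Q t ω) :=
          ENNReal.ofReal_le_ofReal (by linarith [neg_le_abs (U t ω), hQnn t ω])
      _ ≤ ENNReal.ofReal |U t ω| + ENNReal.ofReal (Q t ω) := ENNReal.ofReal_add_le
      _ ≤ _ := add_le_add (le_iSup (fun s => ENNReal.ofReal |U s ω|) t)
          (le_iSup (fun s => ENNReal.ofReal (Q s ω)) t)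
  refine ⟨hpath.mono fun ω h => h.1, ?_⟩
  calc ∫⁻ ω, ENNReal.ofReal (-⨅ t, (U t ω - Q t ω / 2)) ∂μ
      ≤ ∫⁻ ω, ((⨆ t, ENNReal.ofReal |U t ω|) + ⨆ t, ENNReal.ofReal (Q t ω)) ∂μ :=
        lintegral_mono_ae (hpath.mono fun ω h => h.2)
    _ = (∫⁻ ω, ⨆ t, ENNReal.ofReal |U t ω| ∂μ) + ∫⁻ ω, ⨆ t, ENNReal.ofReal (Q t ω) ∂μ :=
        lintegral_add_left hW_meas _
    _ < ⊤ := ENNReal.add_lt_top.2 ⟨hW_fin, hQ_fin⟩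

end LocalMartingale

/-- Remark: for a stochastic exponential `M = exp(U - ⟨U⟩/2)`,
`E[log(1/I_∞)] < ∞ ↔ E[⟨U⟩_∞] < ∞`; moreover `log(1/I_∞) = - inf_t (U_t - ⟨U⟩_t/2)`, so
`E[⟨U⟩_∞] < ∞ ↔ E[inf_t (U_t - ⟨U⟩_t/2)] > -∞`. -/
theorem statement14 {Ω : Type*} {m0 : MeasurableSpace Ω} (μ : Measure Ω)
    [IsProbabilityMeasure μ] (ℱ : Filtration ℝ≥0 m0)
    (U Q : ℝ≥0 → Ω → ℝ)
    (hU : ContLocMart ℱ μ U) (hU0 : ∀ ω, U 0 ω = 0)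
    (hQ : IsQuadVar ℱ μ U Q) :
    ∀ M : ℝ≥0 → Ω → ℝ, (M = fun t ω => Real.exp (U t ω - Q t ω / 2)) →
      ((((∀ᵐ ω ∂μ, 0 < ⨅ t, M t ω) ∧
          ∫⁻ ω, ENNReal.ofReal (Real.log (⨅ t, M t ω)⁻¹) ∂μ < ⊤) ↔
        ∫⁻ ω, (⨆ t, ENNReal.ofReal (Q t ω)) ∂μ < ⊤)) ∧
      (∀ ω, Real.log (⨅ t, M t ω)⁻¹ = -(⨅ t, (U t ω - Q t ω / 2))) ∧
      ((∫⁻ ω, (⨆ t, ENNReal.ofReal (Q t ω)) ∂μ < ⊤) ↔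
        ((∀ᵐ ω ∂μ, BddBelow (Set.range fun t => U t ω - Q t ω / 2)) ∧
          ∫⁻ ω, ENNReal.ofReal (-(⨅ t, (U t ω - Q t ω / 2))) ∂μ < ⊤)) := by
  rintro M rfl
  have hlog : ∀ ω, Real.log (⨅ t, Real.exp (U t ω - Q t ω / 2))⁻¹ = -⨅ t, (U t ω - Q t ω / 2) :=
    fun ω => Real.log_inv_iInf_exp _
  have hiff : (∫⁻ ω, ⨆ t, ENNReal.ofReal (Q t ω) ∂μ < ⊤) ↔
      (∀ᵐ ω ∂μ, BddBelow (range fun t => U t ω - Q t ω / 2)) ∧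
        ∫⁻ ω, ENNReal.ofReal (-⨅ t, (U t ω - Q t ω / 2)) ∂μ < ⊤ :=
    ⟨bddBelow_and_lintegral_neg_iInf_lt_top hU.2.1 hU.2.2 hU0 hQ,
      fun h => lintegral_iSup_lt_top_of_lintegral_neg_iInf_lt_top hU hU0 hQ.1 hQ.2.1 h.1 h.2⟩
  refine ⟨?_, hlog, hiff⟩
  simp only [hlog, Real.iInf_exp_pos_iff]
  exact hiff.symm
end
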